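/- There exist graphs G₁, G₂ with disjoint vertex sets and edges x₁y₁ ∈ E(G₁), x₂y₂ ∈ E(G₂), with x₁, x₂ not pendant, such that for the Hajós sum G₃ = G₁(x₁y₁) +_H G₂(x₂y₂) the equality γ_st(G₃) = γ_st(G₁) + γ_st(G₂) + 1 holds; that is, the upper bound in the Hajós sum theorem is tight. -/

import Mathlib

/-- Degree of a vertex: number of neighbors. -/
noncomputable def deg {V : Type*} (G : SimpleGraph V) (v : V) : ℕ :=
  Nat.card (G.neighborSet v)

/-- `D` is a strong dominating set of `G`. -/
def IsStrongDomSet {V : Type*} (G : SimpleGraph V) (D : Set V) : Prop :=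
  ∀ x ∉ D, ∃ y ∈ D, G.Adj x y ∧ deg G x ≤ deg G y

/-- `D` is a dominating set of `G`. -/
def IsDomSet {V : Type*} (G : SimpleGraph V) (D : Set V) : Prop :=
  ∀ x ∉ D, ∃ y ∈ D, G.Adj x y

/-- The strong domination number. -/
noncomputable def gammaSt {V : Type*} (G : SimpleGraph V) : ℕ :=
  sInf {n | ∃ D : Set V, IsStrongDomSet G D ∧ D.ncard = n}

/-- The domination number. -/
noncomputable def gammaDom {V : Type*} (G : SimpleGraph V) : ℕ :=
  sInf {n | ∃ D : Set V, IsDomSet G D ∧ D.ncard = n}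

/-- Auxiliary graph on `V₁ ⊕ V₂` for the Hajós sum: delete the edges `x₁y₁`, `x₂y₂`,
redirect edges at `x₂` to `x₁` (which will be the identified vertex), add edge `y₁y₂`. -/
def hajosAux {V₁ V₂ : Type*} (G₁ : SimpleGraph V₁) (G₂ : SimpleGraph V₂)
    (x₁ y₁ : V₁) (x₂ y₂ : V₂) : SimpleGraph (V₁ ⊕ V₂) where
  Adj a b :=
    match a, b with
    | Sum.inl a, Sum.inl b =>
        G₁.Adj a b ∧ ¬(a = x₁ ∧ b = y₁) ∧ ¬(a = y₁ ∧ b = x₁)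
    | Sum.inr a, Sum.inr b =>
        G₂.Adj a b ∧ ¬(a = x₂ ∧ b = y₂) ∧ ¬(a = y₂ ∧ b = x₂)
    | Sum.inl a, Sum.inr b => (a = x₁ ∧ G₂.Adj x₂ b ∧ b ≠ y₂) ∨ (a = y₁ ∧ b = y₂)
    | Sum.inr a, Sum.inl b => (b = x₁ ∧ G₂.Adj x₂ a ∧ a ≠ y₂) ∨ (b = y₁ ∧ a = y₂)
  symm := ⟨by
    rintro (a | a) (b | b) h <;> dsimp only at h ⊢
    · exact ⟨h.1.symm, fun hc => h.2.2 ⟨hc.2, hc.1⟩, fun hc => h.2.1 ⟨hc.2, hc.1⟩⟩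
    · exact h
    · exact h
    · exact ⟨h.1.symm, fun hc => h.2.2 ⟨hc.2, hc.1⟩, fun hc => h.2.1 ⟨hc.2, hc.1⟩⟩⟩
  loopless := ⟨by
    rintro (a | a) h <;> dsimp only at h
    · exact G₁.irrefl h.1
    · exact G₂.irrefl h.1⟩

/-- The vertex set of the Hajós sum: everything except `x₂`, which is identified with `x₁`. -/
def hajosVerts {V₁ V₂ : Type*} (x₂ : V₂) : Set (V₁ ⊕ V₂) := {v | v ≠ Sum.inr x₂}

/-- The Hajós sum `G₁(x₁y₁) +_H G₂(x₂y₂)`. -/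
def hajosSum {V₁ V₂ : Type*} (G₁ : SimpleGraph V₁) (G₂ : SimpleGraph V₂)
    (x₁ y₁ : V₁) (x₂ y₂ : V₂) : SimpleGraph (hajosVerts (V₁ := V₁) x₂) :=
  (hajosAux G₁ G₂ x₁ y₁ x₂ y₂).induce (hajosVerts x₂)

/-- The identified vertex `v_H(x₁x₂)` of the Hajós sum. -/
def hajosVH {V₁ V₂ : Type*} (x₁ : V₁) (x₂ : V₂) : hajosVerts (V₁ := V₁) (V₂ := V₂) x₂ :=
  ⟨Sum.inl x₁, by simp [hajosVerts]⟩


lemma deg_eq {V : Type*} [Fintype V] (G : SimpleGraph V) [DecidableRel G.Adj] (v : V) :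
    deg G v = G.degree v := by
  rw [deg, Nat.card_coe_set_eq, Set.ncard_eq_toFinset_card']
  rfl

lemma gammaSt_eq {V : Type*} [Fintype V] [DecidableEq V] (G : SimpleGraph V)
    [DecidableRel G.Adj] (k : ℕ) (F : Finset V)
    (hF : ∀ x ∉ F, ∃ y ∈ F, G.Adj x y ∧ G.degree x ≤ G.degree y)
    (hcard : F.card = k)
    (hlow : ∀ F' : Finset V,
      (∀ x ∉ F', ∃ y ∈ F', G.Adj x y ∧ G.degree x ≤ G.degree y) → k ≤ F'.card) :
    gammaSt G = k := by
  have hmem : k ∈ {n | ∃ D : Set V, IsStrongDomSet G D ∧ D.ncard = n} := by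
    refine ⟨(F : Set V), ?_, by simp [hcard]⟩
    intro x hx
    obtain ⟨y, hy, hadj, hd⟩ := hF x (by simpa using hx)
    exact ⟨y, by simpa using hy, hadj, by rw [deg_eq, deg_eq]; exact hd⟩
  refine le_antisymm (Nat.sInf_le hmem) (le_csInf ⟨k, hmem⟩ ?_)
  rintro n ⟨D, hD, rfl⟩
  have hfin : D.Finite := Set.toFinite D
  have := hlow hfin.toFinset ?_
  · rwa [Set.ncard_eq_toFinset_card _ hfin]
  · intro x hx
    obtain ⟨y, hy, hadj, hd⟩ := hD x (by simpa [Set.Finite.mem_toFinset] using hx)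
    exact ⟨y, by simpa [Set.Finite.mem_toFinset] using hy, hadj,
      by rw [← deg_eq, ← deg_eq]; exact hd⟩

section inst
variable {V₁ V₂ : Type*} [DecidableEq V₁] [DecidableEq V₂]
  (G₁ : SimpleGraph V₁) (G₂ : SimpleGraph V₂)
  [DecidableRel G₁.Adj] [DecidableRel G₂.Adj] (x₁ y₁ : V₁) (x₂ y₂ : V₂)

instance : DecidableRel (hajosAux G₁ G₂ x₁ y₁ x₂ y₂).Adj := fun a b => by
  cases a <;> cases b <;>
    first
      | exact inferInstanceAs (Decidable (_ ∧ _))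
      | exact inferInstanceAs (Decidable (_ ∨ _))

instance : DecidablePred (· ∈ hajosVerts (V₁ := V₁) x₂) := fun v =>
  inferInstanceAs (Decidable (v ≠ Sum.inr x₂))

instance : DecidableRel (hajosSum G₁ G₂ x₁ y₁ x₂ y₂).Adj := fun a b =>
  inferInstanceAs (Decidable ((hajosAux G₁ G₂ x₁ y₁ x₂ y₂).Adj a b))
end inst

def myG₁ : SimpleGraph (Fin 3) := SimpleGraph.fromRel (fun a b => a = 0 ∧ (b = 1 ∨ b = 2))
def myG₂ : SimpleGraph (Fin 4) :=
  SimpleGraph.fromRel (fun a b => (a = 0 ∧ (b = 1 ∨ b = 2 ∨ b = 3)) ∨ (a = 1 ∧ b = 2))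

instance : DecidableRel myG₁.Adj := fun a b =>
  decidable_of_iff _ (SimpleGraph.fromRel_adj _ a b).symm
instance : DecidableRel myG₂.Adj := fun a b =>
  decidable_of_iff _ (SimpleGraph.fromRel_adj _ a b).symm

abbrev myHV := hajosVerts (V₁ := Fin 3) (V₂ := Fin 4) (1 : Fin 4)
def w1 : myHV := ⟨Sum.inl 0, by decide⟩
def w2 : myHV := ⟨Sum.inl 1, by decide⟩
def w3 : myHV := ⟨Sum.inr 0, by decide⟩

lemma gammaSt_myG₁ : gammaSt myG₁ = 1 :=
  gammaSt_eq _ 1 {0} (by decide) (by decide) (by decide)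

lemma gammaSt_myG₂ : gammaSt myG₂ = 1 :=
  gammaSt_eq _ 1 {0} (by decide) (by decide) (by decide)

lemma gammaSt_mySum : gammaSt (hajosSum myG₁ myG₂ 0 1 1 2) = 3 :=
  gammaSt_eq _ 3 {w1, w2, w3} (by decide) (by decide) (by decide)

/-- The upper bound in the Hajós sum theorem is tight. -/
theorem stmt16 :
    ∃ (n₁ n₂ : ℕ) (G₁ : SimpleGraph (Fin n₁)) (G₂ : SimpleGraph (Fin n₂))
      (x₁ y₁ : Fin n₁) (x₂ y₂ : Fin n₂),
      G₁.Adj x₁ y₁ ∧ G₂.Adj x₂ y₂ ∧ deg G₁ x₁ ≠ 1 ∧ deg G₂ x₂ ≠ 1 ∧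
      gammaSt (hajosSum G₁ G₂ x₁ y₁ x₂ y₂) = gammaSt G₁ + gammaSt G₂ + 1 := by
  refine ⟨3, 4, myG₁, myG₂, 0, 1, 1, 2, by decide, by decide, ?_, ?_, ?_⟩
  · rw [deg_eq]; decide
  · rw [deg_eq]; decide
  · rw [gammaSt_mySum, gammaSt_myG₁, gammaSt_myG₂]
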